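/- In a structured Haar scattering on a graph, each coefficient S_J x(n,q) for 0 ≤ q < 2^J depends only on the restriction of x to the vertex set V_{J,n} of cardinality 2^J, and the vector (S_J x(n,q))_{0 ≤ q < 2^J} is obtained by applying to x restricted to V_{J,n} a matrix all of whose entries are ±1 (a Hadamard-type matrix depending on x, J and n). -/

import Mathlib

/-- Structured Haar scattering on a graph: `S_0 x(n,0) = x(n)` and, with row
pairing `π j` at layer `j`,
`S_{j+1} x(n,2q) = S_j x(π_j(2n),q) + S_j x(π_j(2n+1),q)` and
`S_{j+1} x(n,2q+1) = |S_j x(π_j(2n),q) − S_j x(π_j(2n+1),q)|`. -/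
noncomputable def structScat (π : ℕ → ℕ → ℕ) (x : ℕ → ℝ) : ℕ → ℕ → ℕ → ℝ
  | 0, n, _ => x n
  | (j + 1), n, q =>
      if q % 2 = 0 then
        structScat π x j (π j (2 * n)) (q / 2) + structScat π x j (π j (2 * n + 1)) (q / 2)
      else
        |structScat π x j (π j (2 * n)) (q / 2) - structScat π x j (π j (2 * n + 1)) (q / 2)|

/-- The hierarchical vertex sets: `V_{0,n} = {n}` and
`V_{j+1,n} = V_{j,π_j(2n)} ∪ V_{j,π_j(2n+1)}`. -/
def Vset (π : ℕ → ℕ → ℕ) : ℕ → ℕ → Finset ℕ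
  | 0, n => {n}
  | (j + 1), n => Vset π j (π j (2 * n)) ∪ Vset π j (π j (2 * n + 1))

/-!
Unfolding the recursion, `S_J x(n,q)` is built from the values `x(v)`, `v ∈ V_{J,n}`, by sums,
differences and absolute values. An absolute value `|a|` equals `a` or `-a`, so at every stage the
coefficient is a signed sum `∑ ±x(v)`; it stays one across each merge because the two halves of
`V_{j+1,n}` are disjoint, which follows inductively from the injectivity of the row pairings. -/

open Finset

section SignedSum

variable {ι R : Type*} [Ring R]

def IsSignedSum (x : ι → R) (V : Finset ι) (s : R) : Prop :=
  ∃ σ : ι → R, (∀ v, σ v = 1 ∨ σ v = -1) ∧ s = ∑ v ∈ V, σ v * x v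

lemma isSignedSum_singleton (x : ι → R) (v : ι) : IsSignedSum x {v} (x v) :=
  ⟨fun _ => 1, fun _ => Or.inl rfl, by simp⟩

lemma IsSignedSum.neg {x : ι → R} {V : Finset ι} {s : R} (h : IsSignedSum x V s) :
    IsSignedSum x V (-s) := by
  obtain ⟨σ, hσ, rfl⟩ := h
  refine ⟨fun v => -σ v, fun v => ?_, by simp [Finset.sum_neg_distrib]⟩
  rcases hσ v with h | h <;> simp [h]

lemma IsSignedSum.union [DecidableEq ι] {x : ι → R} {V W : Finset ι} {s t : R}
    (hVW : Disjoint V W) (hs : IsSignedSum x V s) (ht : IsSignedSum x W t) :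
    IsSignedSum x (V ∪ W) (s + t) := by
  obtain ⟨σ, hσ, rfl⟩ := hs
  obtain ⟨τ, hτ, rfl⟩ := ht
  refine ⟨V.piecewise σ τ, fun v => ?_, ?_⟩
  · by_cases hv : v ∈ V
    · simpa [hv] using hσ v
    · simpa [hv] using hτ v
  · rw [sum_union hVW]
    congr 1
    · exact sum_congr rfl fun v hv => by rw [piecewise_eq_of_mem _ _ _ hv]
    · exact sum_congr rfl fun v hv => by
        rw [piecewise_eq_of_notMem _ _ _ (disjoint_right.mp hVW hv)]

lemma IsSignedSum.abs [LinearOrder R] {x : ι → R} {V : Finset ι} {s : R}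
    (h : IsSignedSum x V s) : IsSignedSum x V |s| := by
  rcases abs_choice s with hs | hs <;> rw [hs]
  · exact h
  · exact h.neg

end SignedSum

section Vset

variable {K : ℕ} {π : ℕ → ℕ → ℕ}

lemma two_mul_add_one_lt_two_pow_sub {j n : ℕ} (hj : j + 1 ≤ K) (hn : n < 2 ^ (K - (j + 1))) :
    2 * n + 1 < 2 ^ (K - j) := by
  have : 2 ^ (K - j) = 2 * 2 ^ (K - (j + 1)) := by
    rw [← pow_succ']
    congr 1
    omega
  omega

lemma Vset_pairwiseDisjoint (hbd : ∀ j m, m < 2 ^ (K - j) → π j m < 2 ^ (K - j))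
    (hinj : ∀ j, Set.InjOn (π j) (Set.Iio (2 ^ (K - j)))) {j : ℕ} (hj : j ≤ K) :
    (Set.Iio (2 ^ (K - j))).PairwiseDisjoint (Vset π j) := by
  induction j with
  | zero =>
    intro m _ m' _ hne
    simpa [Vset] using hne
  | succ j ih =>
    have hchildren : (Set.Iio (2 ^ (K - j))).PairwiseDisjoint (Vset π j ∘ π j) :=
      (hinj j).pairwiseDisjoint_image.mp <| (ih (by omega)).subset <| by
        rintro _ ⟨m, hm, rfl⟩
        exact hbd j m hm
    have hchild {a b : ℕ} (ha : a < 2 ^ (K - j)) (hb : b < 2 ^ (K - j)) (hab : a ≠ b) :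
        Disjoint (Vset π j (π j a)) (Vset π j (π j b)) :=
      hchildren ha hb hab
    intro m hm m' hm' hne
    have hm1 := two_mul_add_one_lt_two_pow_sub hj hm
    have hm1' := two_mul_add_one_lt_two_pow_sub hj hm'
    simp only [Function.onFun, Vset, disjoint_union_left, disjoint_union_right]
    refine ⟨⟨?_, ?_⟩, ?_, ?_⟩ <;> exact hchild (by omega) (by omega) (by omega)

lemma Vset_children_disjoint (hbd : ∀ j m, m < 2 ^ (K - j) → π j m < 2 ^ (K - j))
    (hinj : ∀ j, Set.InjOn (π j) (Set.Iio (2 ^ (K - j)))) {j n : ℕ} (hj : j + 1 ≤ K)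
    (hn : n < 2 ^ (K - (j + 1))) :
    Disjoint (Vset π j (π j (2 * n))) (Vset π j (π j (2 * n + 1))) := by
  have hn1 := two_mul_add_one_lt_two_pow_sub hj hn
  refine Vset_pairwiseDisjoint hbd hinj (by omega) (hbd j _ (by omega)) (hbd j _ hn1) ?_
  exact fun h => by simpa using hinj j (Set.mem_Iio.mpr (by omega)) (Set.mem_Iio.mpr hn1) h

lemma card_Vset (hbd : ∀ j m, m < 2 ^ (K - j) → π j m < 2 ^ (K - j))
    (hinj : ∀ j, Set.InjOn (π j) (Set.Iio (2 ^ (K - j)))) {j n : ℕ} (hj : j ≤ K)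
    (hn : n < 2 ^ (K - j)) : (Vset π j n).card = 2 ^ j := by
  induction j generalizing n with
  | zero => simp [Vset]
  | succ j ih =>
    have hn1 := two_mul_add_one_lt_two_pow_sub hj hn
    rw [Vset, card_union_of_disjoint (Vset_children_disjoint hbd hinj hj hn),
      ih (by omega) (hbd j _ (by omega)), ih (by omega) (hbd j _ hn1), pow_succ]
    ring

lemma structScat_isSignedSum (hbd : ∀ j m, m < 2 ^ (K - j) → π j m < 2 ^ (K - j))
    (hinj : ∀ j, Set.InjOn (π j) (Set.Iio (2 ^ (K - j)))) (x : ℕ → ℝ) {j n : ℕ} (hj : j ≤ K)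
    (hn : n < 2 ^ (K - j)) (q : ℕ) : IsSignedSum x (Vset π j n) (structScat π x j n q) := by
  induction j generalizing n q with
  | zero => exact isSignedSum_singleton x n
  | succ j ih =>
    have hn1 := two_mul_add_one_lt_two_pow_sub hj hn
    have hdisj := Vset_children_disjoint hbd hinj hj hn
    have h₀ := ih (by omega) (hbd j (2 * n) (by omega)) (q / 2)
    have h₁ := ih (by omega) (hbd j (2 * n + 1) hn1) (q / 2)
    rw [structScat, Vset]
    split_ifs
    · exact h₀.union hdisj h₁
    · exact (h₀.union hdisj h₁.neg).abs

end Vset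

/-- Each structured Haar scattering coefficient `S_J x(n,q)`, `0 ≤ q < 2^J`,
depends only on the restriction of `x` to the set `V_{J,n}` of cardinality
`2^J`, through a matrix with entries `±1` (a Hadamard-type matrix depending on
`x`, `J` and `n`): `S_J x(n,q) = Σ_{v ∈ V_{J,n}} σ(q,v) x(v)` with
`σ(q,v) ∈ {1,−1}`. -/
theorem structScat_hadamard (K J : ℕ) (hJ : J ≤ K) (π : ℕ → ℕ → ℕ)
    (hbd : ∀ j m, m < 2 ^ (K - j) → π j m < 2 ^ (K - j))
    (hinj : ∀ j, Set.InjOn (π j) (Set.Iio (2 ^ (K - j))))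
    (x : ℕ → ℝ) (n : ℕ) (hn : n < 2 ^ (K - J)) :
    (Vset π J n).card = 2 ^ J ∧
    ∃ σ : ℕ → ℕ → ℝ, (∀ q v, σ q v = 1 ∨ σ q v = -1) ∧
      ∀ q < 2 ^ J, structScat π x J n q = ∑ v ∈ Vset π J n, σ q v * x v := by
  refine ⟨card_Vset hbd hinj hJ hn, ?_⟩
  choose σ hσ hsum using structScat_isSignedSum hbd hinj x hJ hn
  exact ⟨σ, hσ, fun q _ => hsum q⟩
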